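/- Assume M_j is reversible with respect to Π_j with ‖Π_{j-1}/Π_j‖_∞ < ∞. Let f_{j-1} ∈ L²(Π_{j-1}) with Π_{j-1}(f_{j-1}) = 1 and let f_j = M̄_j f_{j-1}. Then Var_j(f_j) ≤ (1 − λ_j + α_j) Var_{j-1}(f_{j-1}) + α_j, where λ_j is the spectral gap of Q_j and α_j the discrepancy coefficient. -/

import Mathlib

open MeasureTheory ProbabilityTheory

/-- Reversibility of a kernel `M` with respect to a measure `π` (detailed balance). -/
def IsReversible {Θ : Type*} [MeasurableSpace Θ] (M : Kernel Θ Θ) (π : Measure Θ) : Prop :=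
  ∀ A B : Set Θ, MeasurableSet A → MeasurableSet B →
    ∫⁻ x in A, M x B ∂π = ∫⁻ x in B, M x A ∂π

/-- `M̄ f(u) = ∫ M(u,dv) f(v) r(v)`, where `r = Π_{j-1}/Π_j` is the density ratio. -/
noncomputable def mbar {Θ : Type*} [MeasurableSpace Θ] (M : Kernel Θ Θ) (r : Θ → ℝ)
    (f : Θ → ℝ) (u : Θ) : ℝ :=
  ∫ v, f v * r v ∂(M u)

/-- The finite kernel `Q_j(x, ·) = ∫ M(x,dy) ∫_· M(y,dz) r(z)` where `r = Π_{j-1}/Π_j`. -/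
noncomputable def Qmeas {Θ : Type*} [MeasurableSpace Θ] (M : Kernel Θ Θ) (r : Θ → ℝ)
    (x : Θ) : Measure Θ :=
  (M x).bind (fun y => (M y).withDensity (fun z => ENNReal.ofReal (r z)))

/-- `Var_π(f) = π(f²) − π(f)²`. -/
noncomputable def varI {Θ : Type*} [MeasurableSpace Θ] (π : Measure Θ) (f : Θ → ℝ) : ℝ :=
  (∫ x, (f x) ^ 2 ∂π) - (∫ x, f x ∂π) ^ 2

/-- The discrepancy coefficient
`α_j = sup{ ∫ Π_{j-1}(dx) f²(x) ∫ M_j²(x,dz) |r(z) − 1| : Π_{j-1}(f²) = 1 }`. -/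
noncomputable def discrepancy {Θ : Type*} [MeasurableSpace Θ] (πprev : Measure Θ)
    (M : Kernel Θ Θ) (r : Θ → ℝ) : ℝ :=
  sSup {a : ℝ | ∃ f : Θ → ℝ, Measurable f ∧ Integrable (fun x => (f x) ^ 2) πprev ∧
    (∫ x, (f x) ^ 2 ∂πprev) = 1 ∧
    a = ∫ x, (f x) ^ 2 * (∫ z, |r z - 1| ∂((M x).bind (fun y => M y))) ∂πprev}

/-- The spectral gap `λ_j = inf{ G_j(f) : f ∈ L²(Π_{j-1}), Var_{j-1}(f) > 0 }` of `Q_j`. -/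
noncomputable def specGap {Θ : Type*} [MeasurableSpace Θ] (πprev : Measure Θ)
    (M : Kernel Θ Θ) (r : Θ → ℝ) : ℝ :=
  sInf {g : ℝ | ∃ f : Θ → ℝ, Measurable f ∧ Integrable (fun x => (f x) ^ 2) πprev ∧
    0 < varI πprev f ∧
    g = (∫ x, (∫ y, (f y - f x) ^ 2 ∂(Qmeas M r x)) ∂πprev) /
        (∫ x, (∫ y, (f y - f x) ^ 2 ∂πprev) ∂πprev)}

/-!
Put `R = Π_{j-1}/Π_j` and `Q(x, dz) = R(z) M²(x, dz)`. Since `M` is reversible for `Π_j`, so is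
`M²`, and reweighting both sides by `R` makes `Q` reversible for `Π_{j-1} = R Π_j`. Reversibility
of `M` turns `Π_j((M̄f)²)` into `Π_{j-1}(f · Qf)`, and the symmetry of `Π_{j-1} ⊗ Q` gives the
Dirichlet identity `2 Π_{j-1}(f · Qf) = 2 Π_{j-1}(f² Q1) − ∬ (f y − f x)² Q(x, dy) Π_{j-1}(dx)`.
The spectral gap bounds the double integral below by `2 λ Var_{j-1}(f)`, and
`Q1 = M²R ≤ 1 + M²|R − 1|` bounds `Π_{j-1}(f² Q1)` by
`(1 + α) Π_{j-1}(f²) = (1 + α) (Var_{j-1}(f) + 1)`. Since also `Π_j(M̄f) = Π_{j-1}(f) = 1`,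
the claim follows.

The computations are carried out with lower Lebesgue integrals, so that no integrability side
conditions arise before the final passage to real numbers.
-/

open scoped ENNReal

theorem isReversible_iff_kernel_isReversible {Θ : Type*} [MeasurableSpace Θ] {M : Kernel Θ Θ}
    {π : Measure Θ} : IsReversible M π ↔ M.IsReversible π :=
  ⟨fun h _ _ hA hB => h _ _ hA hB, fun h _ _ hA hB => h hA hB⟩

theorem ENNReal.ofReal_sub_sq_add_two_mul {a b : ℝ} (ha : 0 ≤ a) (hb : 0 ≤ b) :
    ENNReal.ofReal ((b - a) ^ 2) + 2 * (ENNReal.ofReal a * ENNReal.ofReal b)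
      = ENNReal.ofReal a ^ 2 + ENNReal.ofReal b ^ 2 := by
  calc _ = ENNReal.ofReal ((b - a) ^ 2 + 2 * (a * b)) := by
        rw [ENNReal.ofReal_add (by positivity) (by positivity), ENNReal.ofReal_mul zero_le_two,
          ENNReal.ofReal_mul ha, ENNReal.ofReal_ofNat]
    _ = ENNReal.ofReal (a ^ 2 + b ^ 2) := by ring_nf
    _ = _ := by
        rw [ENNReal.ofReal_add (by positivity) (by positivity), ENNReal.ofReal_pow ha,
          ENNReal.ofReal_pow hb]

namespace ProbabilityTheory.Kernel.IsReversible

variable {α : Type*} [MeasurableSpace α] {κ : Kernel α α} {π : Measure α}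

theorem map_swap_compProd [IsFiniteMeasure π] [IsFiniteKernel κ] (hκ : κ.IsReversible π) :
    (π ⊗ₘ κ).map Prod.swap = π ⊗ₘ κ := by
  refine ext_of_generate_finite _ generateFrom_prod.symm isPiSystem_prod ?_ ?_
  · rintro _ ⟨A, hA, B, hB, rfl⟩
    rw [Measure.map_apply measurable_swap (hA.prod hB), Set.preimage_swap_prod,
      Measure.compProd_apply_prod hB hA, Measure.compProd_apply_prod hA hB]
    exact hκ hB hA
  · rw [Measure.map_apply measurable_swap MeasurableSet.univ, Set.preimage_univ]

theorem lintegral_mul_lintegral_comm [IsFiniteMeasure π] [IsFiniteKernel κ]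
    (hκ : κ.IsReversible π) {g h : α → ℝ≥0∞} (hg : Measurable g) (hh : Measurable h) :
    ∫⁻ x, g x * ∫⁻ y, h y ∂κ x ∂π = ∫⁻ x, h x * ∫⁻ y, g y ∂κ x ∂π := by
  have hcompProd : ∀ {u v : α → ℝ≥0∞}, Measurable u → Measurable v →
      ∫⁻ x, u x * ∫⁻ y, v y ∂κ x ∂π = ∫⁻ p, u p.1 * v p.2 ∂(π ⊗ₘ κ) := fun {u v} hu hv => by
    rw [Measure.lintegral_compProd (f := fun p => u p.1 * v p.2) (by fun_prop)]
    exact lintegral_congr fun x => (lintegral_const_mul _ hv).symm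
  rw [hcompProd hg hh, hcompProd hh hg]
  conv_lhs => rw [← hκ.map_swap_compProd]
  rw [MeasureTheory.lintegral_map (f := fun p => g p.1 * h p.2) (by fun_prop) measurable_swap]
  exact lintegral_congr fun p => mul_comm _ _

theorem of_lintegral_mul_lintegral_comm
    (H : ∀ g h : α → ℝ≥0∞, Measurable g → Measurable h →
      ∫⁻ x, g x * ∫⁻ y, h y ∂κ x ∂π = ∫⁻ x, h x * ∫⁻ y, g y ∂κ x ∂π) :
    κ.IsReversible π := by
  have hind : ∀ {A B : Set α}, MeasurableSet A → MeasurableSet B →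
      ∫⁻ x, A.indicator 1 x * ∫⁻ y, B.indicator 1 y ∂κ x ∂π = ∫⁻ x in A, κ x B ∂π := by
    intro A B hA hB
    rw [← lintegral_indicator hA]
    congr with x
    by_cases hx : x ∈ A <;> simp [hx, lintegral_indicator_one hB]
  intro A B hA hB
  rw [← hind hA hB, ← hind hB hA]
  exact H _ _ (measurable_one.indicator hA) (measurable_one.indicator hB)

theorem comp_self [IsFiniteMeasure π] [IsFiniteKernel κ] (hκ : κ.IsReversible π) :
    (κ ∘ₖ κ).IsReversible π := by
  have hcomp : ∀ {g h : α → ℝ≥0∞}, Measurable g → Measurable h →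
      ∫⁻ x, g x * ∫⁻ y, h y ∂(κ ∘ₖ κ) x ∂π
        = ∫⁻ x, (∫⁻ y, h y ∂κ x) * ∫⁻ y, g y ∂κ x ∂π := fun hg hh => by
    simp_rw [Kernel.lintegral_comp _ _ _ hh]
    exact hκ.lintegral_mul_lintegral_comm hg (hh.lintegral_kernel (κ := κ))
  refine of_lintegral_mul_lintegral_comm fun g h hg hh => ?_
  rw [hcomp hg hh, hcomp hh hg]
  exact lintegral_congr fun x => mul_comm _ _

theorem withDensity [IsFiniteMeasure π] [IsFiniteKernel κ] (hκ : κ.IsReversible π)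
    {R : α → ℝ≥0∞} (hR : Measurable R) :
    (κ.withDensity fun _ => R).IsReversible (π.withDensity R) := by
  have hdens : ∀ {g h : α → ℝ≥0∞}, Measurable g → Measurable h →
      ∫⁻ x, g x * ∫⁻ y, h y ∂(κ.withDensity fun _ => R) x ∂(π.withDensity R)
        = ∫⁻ x, (R x * g x) * ∫⁻ y, R y * h y ∂κ x ∂π := fun {g h} hg hh => by
    rw [lintegral_withDensity_eq_lintegral_mul _ hR
      (g := fun x => g x * ∫⁻ y, h y ∂(κ.withDensity fun _ => R) x)
      (hg.mul (hh.lintegral_kernel (κ := κ.withDensity fun _ => R)))]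
    refine lintegral_congr fun x => ?_
    rw [Pi.mul_apply, Kernel.lintegral_withDensity _ (f := fun _ => R) (hR.comp measurable_snd) _
      hh, mul_assoc]
  refine of_lintegral_mul_lintegral_comm fun g h hg hh => ?_
  rw [hdens hg hh, hdens hh hg]
  exact hκ.lintegral_mul_lintegral_comm (hR.mul hg) (hR.mul hh)

theorem lintegral_lintegral_sq [IsFiniteMeasure π] [IsFiniteKernel κ] (hκ : κ.IsReversible π)
    {h : α → ℝ≥0∞} (hh : Measurable h) :
    ∫⁻ x, (∫⁻ y, h y ∂κ x) ^ 2 ∂π = ∫⁻ x, h x * ∫⁻ y, h y ∂(κ ∘ₖ κ) x ∂π := by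
  simp_rw [Kernel.lintegral_comp _ _ _ hh, sq]
  rw [← hκ.lintegral_mul_lintegral_comm (hh.lintegral_kernel (κ := κ)) hh]

theorem lintegral_lintegral [IsFiniteMeasure π] [IsMarkovKernel κ] (hκ : κ.IsReversible π)
    {h : α → ℝ≥0∞} (hh : Measurable h) :
    ∫⁻ x, ∫⁻ y, h y ∂κ x ∂π = ∫⁻ x, h x ∂π := by
  simpa using hκ.lintegral_mul_lintegral_comm measurable_one hh

theorem lintegral_lintegral_sub_sq_add_two_mul [IsFiniteMeasure π] [IsFiniteKernel κ]
    (hκ : κ.IsReversible π) {f : α → ℝ} (hf : Measurable f) (hf0 : 0 ≤ f) :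
    ∫⁻ x, ∫⁻ y, ENNReal.ofReal ((f y - f x) ^ 2) ∂κ x ∂π
        + 2 * ∫⁻ x, ENNReal.ofReal (f x) * ∫⁻ y, ENNReal.ofReal (f y) ∂κ x ∂π
      = 2 * ∫⁻ x, ENNReal.ofReal (f x) ^ 2 * κ x Set.univ ∂π := by
  set F : α → ℝ≥0∞ := fun x => ENNReal.ofReal (f x)
  have hF : Measurable F := hf.ennreal_ofReal
  have hsq : ∫⁻ x, ∫⁻ y, F y ^ 2 ∂κ x ∂π = ∫⁻ x, F x ^ 2 * κ x Set.univ ∂π := by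
    simpa using hκ.lintegral_mul_lintegral_comm measurable_one (hF.pow_const 2)
  calc ∫⁻ x, ∫⁻ y, ENNReal.ofReal ((f y - f x) ^ 2) ∂κ x ∂π
        + 2 * ∫⁻ x, F x * ∫⁻ y, F y ∂κ x ∂π
      = ∫⁻ x, ∫⁻ y, (ENNReal.ofReal ((f y - f x) ^ 2) + 2 * (F x * F y)) ∂κ x ∂π := by
        rw [← lintegral_const_mul (f := fun x => F x * ∫⁻ y, F y ∂κ x) _
            (hF.mul (hF.lintegral_kernel (κ := κ))),
          ← lintegral_add_left (Measurable.lintegral_kernel_prod_right (by fun_prop))]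
        refine lintegral_congr fun x => ?_
        rw [lintegral_add_left (by fun_prop), lintegral_const_mul _ (by fun_prop),
          lintegral_const_mul _ hF]
    _ = ∫⁻ x, ∫⁻ y, (F x ^ 2 + F y ^ 2) ∂κ x ∂π := by
        simp_rw [F, ENNReal.ofReal_sub_sq_add_two_mul (hf0 _) (hf0 _)]
    _ = ∫⁻ x, F x ^ 2 * κ x Set.univ ∂π + ∫⁻ x, ∫⁻ y, F y ^ 2 ∂κ x ∂π := by
        rw [← lintegral_add_left (f := fun x => F x ^ 2 * κ x Set.univ)
          ((hF.pow_const 2).mul (κ.measurable_coe .univ))]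
        refine lintegral_congr fun x => ?_
        rw [lintegral_add_left measurable_const, MeasureTheory.lintegral_const]
    _ = _ := by rw [hsq, two_mul]

end ProbabilityTheory.Kernel.IsReversible

section Integrals

variable {Θ : Type*} [MeasurableSpace Θ] {μ : Measure Θ}

theorem varI_toReal {G : Θ → ℝ≥0∞} (hG : AEMeasurable G μ) (hG_lt : ∀ᵐ x ∂μ, G x < ∞) :
    varI μ (fun x => (G x).toReal) = (∫⁻ x, G x ^ 2 ∂μ).toReal - (∫⁻ x, G x ∂μ).toReal ^ 2 := by
  have hG2 : ∫ x, (G x).toReal ^ 2 ∂μ = (∫⁻ x, G x ^ 2 ∂μ).toReal := by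
    simp_rw [← ENNReal.toReal_pow]
    exact integral_toReal (hG.pow_const 2) (hG_lt.mono fun x hx => ENNReal.pow_lt_top hx)
  rw [varI, hG2, integral_toReal hG hG_lt]

theorem integral_integral_sub_sq [IsProbabilityMeasure μ] {f : Θ → ℝ} (hf : Integrable f μ)
    (hf2 : Integrable (fun x => f x ^ 2) μ) :
    ∫ x, ∫ y, (f y - f x) ^ 2 ∂μ ∂μ = 2 * varI μ f := by
  have hinner : ∀ x, ∫ y, (f y - f x) ^ 2 ∂μ
      = ∫ y, f y ^ 2 ∂μ - 2 * f x * ∫ y, f y ∂μ + f x ^ 2 := fun x => by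
    have h1 : Integrable (fun y => f y ^ 2 - 2 * f x * f y) μ := hf2.sub (hf.const_mul _)
    calc ∫ y, (f y - f x) ^ 2 ∂μ = ∫ y, (f y ^ 2 - 2 * f x * f y + f x ^ 2) ∂μ := by
          congr with y; ring
      _ = _ := by
          rw [integral_add h1 (integrable_const _), integral_sub hf2 (hf.const_mul _),
            integral_const_mul, integral_const]
          simp
  simp_rw [hinner]
  have h2 : Integrable (fun x => ∫ y, f y ^ 2 ∂μ - 2 * f x * ∫ y, f y ∂μ) μ :=
    (integrable_const _).sub ((hf.const_mul 2).mul_const _)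
  rw [integral_add h2 hf2, integral_sub (integrable_const _) ((hf.const_mul 2).mul_const _),
    integral_mul_const, integral_const_mul, integral_const, varI, probReal_univ, smul_eq_mul,
    one_mul]
  ring

theorem integral_abs_sub_one_le [IsProbabilityMeasure μ] {r : Θ → ℝ} {C : ℝ}
    (hrC : ∀ z, |r z| ≤ C) : ∫ z, |r z - 1| ∂μ ≤ C + 1 := by
  calc ∫ z, |r z - 1| ∂μ ≤ ∫ _, C + 1 ∂μ :=
        integral_mono_of_nonneg (ae_of_all _ fun _ => abs_nonneg _) (integrable_const _)
          (ae_of_all _ fun z => (abs_sub _ _).trans (by simpa using hrC z))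
    _ = C + 1 := by simp

theorem lintegral_ofReal_le_one_add_integral_abs_sub_one [IsProbabilityMeasure μ] {r : Θ → ℝ}
    (hr : Integrable r μ) :
    ∫⁻ z, ENNReal.ofReal (r z) ∂μ ≤ ENNReal.ofReal (1 + ∫ z, |r z - 1| ∂μ) := by
  have hint : Integrable (fun z => |r z - 1|) μ := (hr.sub (integrable_const 1)).abs
  calc ∫⁻ z, ENNReal.ofReal (r z) ∂μ ≤ ∫⁻ z, ENNReal.ofReal (1 + |r z - 1|) ∂μ :=
        lintegral_mono fun z => ENNReal.ofReal_le_ofReal (by linarith [le_abs_self (r z - 1)])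
    _ = ENNReal.ofReal (∫ z, (1 + |r z - 1|) ∂μ) :=
        (ofReal_integral_eq_lintegral_ofReal ((integrable_const 1).add hint)
          (ae_of_all _ fun z => (by positivity : (0 : ℝ) ≤ 1 + |r z - 1|))).symm
    _ = _ := by rw [integral_add (integrable_const 1) hint]; simp

theorem integral_integral_eq_toReal_lintegral_lintegral {κ : Kernel Θ Θ} [IsSFiniteKernel κ]
    {φ : Θ → Θ → ℝ} (hφ : Measurable (Function.uncurry φ)) (hφ0 : ∀ x y, 0 ≤ φ x y)
    (hfin : ∫⁻ x, ∫⁻ y, ENNReal.ofReal (φ x y) ∂κ x ∂μ ≠ ∞) :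
    ∫ x, ∫ y, φ x y ∂κ x ∂μ = (∫⁻ x, ∫⁻ y, ENNReal.ofReal (φ x y) ∂κ x ∂μ).toReal := by
  have hm : Measurable fun x => ∫⁻ y, ENNReal.ofReal (φ x y) ∂κ x :=
    Measurable.lintegral_kernel_prod_right hφ.ennreal_ofReal
  rw [← integral_toReal hm.aemeasurable (ae_lt_top hm hfin)]
  exact integral_congr_ae (ae_of_all _ fun x => integral_eq_lintegral_of_nonneg_ae
    (ae_of_all _ (hφ0 x)) hφ.of_uncurry_left.aestronglyMeasurable)

end Integrals

section Transition

variable {Θ : Type*} [MeasurableSpace Θ] {π πprev πcur : Measure Θ} {M : Kernel Θ Θ}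
  {r f : Θ → ℝ}

noncomputable def Qkernel (M : Kernel Θ Θ) [IsSFiniteKernel M] (r : Θ → ℝ) : Kernel Θ Θ :=
  (M ∘ₖ M).withDensity fun _ z => ENNReal.ofReal (r z)

theorem Qmeas_eq_Qkernel [IsSFiniteKernel M] (hr : Measurable r) (x : Θ) :
    Qmeas M r x = Qkernel M r x := by
  have hR : Measurable (Function.uncurry fun (_ : Θ) z => ENNReal.ofReal (r z)) :=
    hr.ennreal_ofReal.comp measurable_snd
  have hK : (fun y => (M y).withDensity fun z => ENNReal.ofReal (r z))
      = ⇑(M.withDensity fun _ z => ENNReal.ofReal (r z)) :=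
    funext fun y => (Kernel.withDensity_apply M hR y).symm
  ext s hs
  rw [Qmeas, hK, Measure.bind_apply hs (Kernel.aemeasurable _), Qkernel,
    Kernel.withDensity_apply' _ hR, ← lintegral_indicator hs,
    Kernel.lintegral_comp _ _ _ (hr.ennreal_ofReal.indicator hs)]
  refine lintegral_congr fun y => ?_
  rw [Kernel.withDensity_apply' _ hR, lintegral_indicator hs]

theorem Qkernel_apply_univ [IsSFiniteKernel M] (hr : Measurable r) (x : Θ) :
    Qkernel M r x Set.univ = ∫⁻ z, ENNReal.ofReal (r z) ∂(M ∘ₖ M) x := by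
  rw [Qkernel, Kernel.withDensity_apply' _ (f := fun _ z => ENNReal.ofReal (r z))
      (hr.ennreal_ofReal.comp measurable_snd),
    Measure.restrict_univ]

theorem isFiniteKernel_Qkernel [IsFiniteKernel M] {ρ : ℝ} (hρ : ∀ z, r z ≤ ρ) :
    IsFiniteKernel (Qkernel M r) :=
  Kernel.isFiniteKernel_withDensity_of_bounded _ ENNReal.ofReal_ne_top
    fun _ z => ENNReal.ofReal_le_ofReal (hρ z)

theorem isReversible_Qkernel [IsFiniteMeasure π] [IsFiniteKernel M]
    (hM : M.IsReversible π) (hr : Measurable r) :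
    (Qkernel M r).IsReversible (π.withDensity fun z => ENNReal.ofReal (r z)) :=
  hM.comp_self.withDensity hr.ennreal_ofReal

theorem specGap_mul_two_mul_varI_le [IsProbabilityMeasure π] (hf : Measurable f)
    (hf2 : Integrable (fun x => f x ^ 2) π) :
    specGap π M r * (2 * varI π f) ≤ ∫ x, ∫ y, (f y - f x) ^ 2 ∂Qmeas M r x ∂π := by
  have hgap : 0 ≤ specGap π M r :=
    Real.sInf_nonneg (by rintro _ ⟨g, -, -, -, rfl⟩; positivity)
  rcases le_or_gt (varI π f) 0 with hV | hV
  · have : specGap π M r * (2 * varI π f) ≤ 0 :=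
      mul_nonpos_of_nonneg_of_nonpos hgap (by linarith)
    exact this.trans (by positivity)
  · have hf1 : Integrable f π :=
      ((memLp_two_iff_integrable_sq hf.aestronglyMeasurable).2 hf2).integrable one_le_two
    suffices specGap π M r ≤ (∫ x, ∫ y, (f y - f x) ^ 2 ∂Qmeas M r x ∂π) / (2 * varI π f) by
      rwa [le_div_iff₀ (by positivity)] at this
    rw [← integral_integral_sub_sq hf1 hf2]
    exact csInf_le ⟨0, by rintro _ ⟨g, -, -, -, rfl⟩; positivity⟩ ⟨f, hf, hf2, hV, rfl⟩

theorem integrable_mul_integral_abs_sub_one [IsSFiniteKernel M] (hr : Measurable r) {C : ℝ}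
    (hC : ∀ x, ∫ z, |r z - 1| ∂(M ∘ₖ M) x ≤ C) {g : Θ → ℝ}
    (hg : Integrable g π) :
    Integrable (fun x => g x * ∫ z, |r z - 1| ∂(M ∘ₖ M) x) π := by
  have hh : StronglyMeasurable fun x => ∫ z, |r z - 1| ∂(M ∘ₖ M) x :=
    StronglyMeasurable.integral_kernel_prod_right' (f := fun p => |r p.2 - 1|)
      (by fun_prop : Measurable fun p : Θ × Θ => |r p.2 - 1|).stronglyMeasurable
  refine (hg.bdd_mul hh.aestronglyMeasurable (c := C) (ae_of_all _ fun x => ?_)).congr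
    (ae_of_all _ fun x => mul_comm _ _)
  rw [Real.norm_of_nonneg (integral_nonneg fun _ => abs_nonneg _)]
  exact hC x

theorem le_discrepancy [IsSFiniteKernel M] (hr : Measurable r) {C : ℝ}
    (hC : ∀ x, ∫ z, |r z - 1| ∂(M ∘ₖ M) x ≤ C) {g : Θ → ℝ}
    (hg : Measurable g) (hg2 : Integrable (fun x => g x ^ 2) π) (hg1 : ∫ x, g x ^ 2 ∂π = 1) :
    ∫ x, g x ^ 2 * ∫ z, |r z - 1| ∂(M ∘ₖ M) x ∂π ≤ discrepancy π M r := by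
  refine le_csSup ⟨C, ?_⟩ ⟨g, hg, hg2, hg1, rfl⟩
  rintro _ ⟨g', -, hg'2, hg'1, rfl⟩
  calc _ ≤ ∫ x, g' x ^ 2 * C ∂π :=
        integral_mono (integrable_mul_integral_abs_sub_one hr hC hg'2) (hg'2.mul_const C)
          fun x => mul_le_mul_of_nonneg_left (hC x) (sq_nonneg _)
    _ = C := by rw [integral_mul_const, hg'1, one_mul]

theorem discrepancy_nonneg [IsProbabilityMeasure π] [IsSFiniteKernel M] (hr : Measurable r) {C : ℝ}
    (hC : ∀ x, ∫ z, |r z - 1| ∂(M ∘ₖ M) x ≤ C) :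
    0 ≤ discrepancy π M r :=
  (integral_nonneg fun x => by positivity).trans
    (le_discrepancy (π := π) (g := fun _ => 1) hr hC measurable_const (integrable_const _)
      (by simp))

theorem integral_sq_mul_le_discrepancy [IsSFiniteKernel M] (hr : Measurable r) {C : ℝ}
    (hC : ∀ x, ∫ z, |r z - 1| ∂(M ∘ₖ M) x ≤ C)
    (hf : Measurable f) (hf2 : Integrable (fun x => f x ^ 2) π) :
    ∫ x, f x ^ 2 * ∫ z, |r z - 1| ∂(M ∘ₖ M) x ∂π ≤ (∫ x, f x ^ 2 ∂π) * discrepancy π M r := by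
  rcases (integral_nonneg fun x => sq_nonneg (f x) : 0 ≤ ∫ x, f x ^ 2 ∂π).eq_or_lt with hI | hI
  · have hf0 : (fun x => f x ^ 2) =ᵐ[π] 0 :=
      (integral_eq_zero_iff_of_nonneg (fun x => sq_nonneg _) hf2).1 hI.symm
    rw [← hI, zero_mul]
    refine (integral_eq_zero_of_ae (hf0.mono fun x hx => ?_)).le
    simp only [Pi.zero_apply] at hx ⊢
    rw [hx, zero_mul]
  · have hg2 : ∀ x, (f x / √(∫ x, f x ^ 2 ∂π)) ^ 2 = f x ^ 2 / ∫ x, f x ^ 2 ∂π := fun x => by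
      rw [div_pow, Real.sq_sqrt hI.le]
    have key := le_discrepancy hr hC (g := fun x => f x / √(∫ x, f x ^ 2 ∂π)) (hf.div_const _)
      (by simp only [hg2]; exact hf2.div_const _)
      (by simp only [hg2]; rw [integral_div, div_self hI.ne'])
    simp_rw [hg2, div_mul_eq_mul_div] at key
    rwa [integral_div, div_le_iff₀ hI, mul_comm] at key

theorem lintegral_ofReal_sq_mul_Qkernel_univ_le [IsMarkovKernel M] (hr : Measurable r) {C : ℝ}
    (hrC : ∀ z, |r z| ≤ C) (hf : Measurable f) (hf2 : Integrable (fun x => f x ^ 2) π) :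
    ∫⁻ x, ENNReal.ofReal (f x ^ 2) * Qkernel M r x Set.univ ∂π
      ≤ ENNReal.ofReal ((1 + discrepancy π M r) * ∫ x, f x ^ 2 ∂π) := by
  have hC : ∀ x, ∫ z, |r z - 1| ∂(M ∘ₖ M) x ≤ C + 1 := fun x => integral_abs_sub_one_le hrC
  have hint := integrable_mul_integral_abs_sub_one hr hC hf2
  calc ∫⁻ x, ENNReal.ofReal (f x ^ 2) * Qkernel M r x Set.univ ∂π
      ≤ ∫⁻ x, ENNReal.ofReal (f x ^ 2 + f x ^ 2 * ∫ z, |r z - 1| ∂(M ∘ₖ M) x) ∂π := by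
        refine lintegral_mono fun x => ?_
        rw [← mul_one_add, ENNReal.ofReal_mul (sq_nonneg _), Qkernel_apply_univ hr]
        gcongr
        exact lintegral_ofReal_le_one_add_integral_abs_sub_one
          (Integrable.of_bound hr.aestronglyMeasurable C (ae_of_all _ hrC))
    _ = ENNReal.ofReal (∫ x, (f x ^ 2 + f x ^ 2 * ∫ z, |r z - 1| ∂(M ∘ₖ M) x) ∂π) :=
        (ofReal_integral_eq_lintegral_ofReal (hf2.add hint)
          (ae_of_all _ fun x => (by positivity :
            (0 : ℝ) ≤ f x ^ 2 + f x ^ 2 * ∫ z, |r z - 1| ∂(M ∘ₖ M) x))).symm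
    _ ≤ _ := by
        refine ENNReal.ofReal_le_ofReal ?_
        rw [integral_add hf2 hint, one_add_mul]
        linarith [integral_sq_mul_le_discrepancy hr hC hf hf2]

theorem mbar_eq_toReal_lintegral (hr : Measurable r) (hr0 : 0 ≤ r) (hf : Measurable f)
    (hf0 : 0 ≤ f) (u : Θ) :
    mbar M r f u = (∫⁻ v, ENNReal.ofReal (f v) * ENNReal.ofReal (r v) ∂M u).toReal := by
  rw [mbar, integral_eq_lintegral_of_nonneg_ae (ae_of_all _ fun v => mul_nonneg (hf0 v) (hr0 v))
    (hf.mul hr).aestronglyMeasurable]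
  simp_rw [ENNReal.ofReal_mul (hf0 _)]

theorem varI_mbar [IsFiniteMeasure πcur] [IsMarkovKernel M] (hM : M.IsReversible πcur)
    (hr : Measurable r) (hr0 : 0 ≤ r) (hf : Measurable f) (hf0 : 0 ≤ f)
    (hdens : πprev = πcur.withDensity fun z => ENNReal.ofReal (r z))
    (hf1 : ∫⁻ x, ENNReal.ofReal (f x) ∂πprev = 1) :
    varI πcur (mbar M r f)
      = (∫⁻ x, ENNReal.ofReal (f x) * ∫⁻ y, ENNReal.ofReal (f y) ∂Qkernel M r x ∂πprev).toReal
        - 1 := by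
  set F : Θ → ℝ≥0∞ := fun x => ENNReal.ofReal (f x)
  set R : Θ → ℝ≥0∞ := fun x => ENNReal.ofReal (r x)
  have hF : Measurable F := hf.ennreal_ofReal
  have hR : Measurable R := hr.ennreal_ofReal
  have hFR : Measurable fun v => F v * R v := hF.mul hR
  set G : Θ → ℝ≥0∞ := fun u => ∫⁻ v, F v * R v ∂M u
  have hG : Measurable G := hFR.lintegral_kernel
  have hG1 : ∫⁻ u, G u ∂πcur = 1 := by
    rw [hM.lintegral_lintegral hFR, ← hf1, hdens,
      lintegral_withDensity_eq_lintegral_mul _ hR hF]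
    simp_rw [Pi.mul_apply, mul_comm]
  have hG2 : ∫⁻ u, G u ^ 2 ∂πcur = ∫⁻ x, F x * ∫⁻ y, F y ∂Qkernel M r x ∂πprev := by
    rw [hM.lintegral_lintegral_sq hFR, hdens, lintegral_withDensity_eq_lintegral_mul _ hR
      (g := fun x => F x * ∫⁻ y, F y ∂Qkernel M r x) (hF.mul hF.lintegral_kernel)]
    refine lintegral_congr fun x => ?_
    rw [Pi.mul_apply, Qkernel, Kernel.lintegral_withDensity _ (f := fun _ => R)
      (hR.comp measurable_snd) _ hF]
    simp_rw [mul_comm (R _) (F _)]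
    ring
  have hmbar : mbar M r f = fun u => (G u).toReal :=
    funext (mbar_eq_toReal_lintegral hr hr0 hf hf0)
  rw [hmbar, varI_toReal hG.aemeasurable (ae_lt_top hG (by simp [hG1])), hG1, hG2,
    ENNReal.toReal_one, one_pow]

end Transition

theorem variance_contraction
    {Θ : Type*} [MeasurableSpace Θ]
    (πprev πcur : Measure Θ)
    (hπprev : IsProbabilityMeasure πprev) (hπcur : IsProbabilityMeasure πcur)
    (M : Kernel Θ Θ) (hM : IsMarkovKernel M)
    (hrev : IsReversible M πcur)
    (r : Θ → ℝ) (hrmeas : Measurable r) (hrnonneg : ∀ z, 0 ≤ r z)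
    (hdens : πprev = πcur.withDensity (fun z => ENNReal.ofReal (r z)))
    (ρ : ℝ) (hρ : ∀ z, r z ≤ ρ)
    (f : Θ → ℝ) (hfmeas : Measurable f) (hfnonneg : ∀ x, 0 ≤ f x)
    (hfL2 : Integrable (fun x => (f x) ^ 2) πprev)
    (hfdens : (∫ x, f x ∂πprev) = 1) :
    varI πcur (mbar M r f) ≤
      (1 - specGap πprev M r + discrepancy πprev M r) * varI πprev f
        + discrepancy πprev M r := by
  have hMrev := isReversible_iff_kernel_isReversible.1 hrev
  have hrC : ∀ z, |r z| ≤ ρ := fun z => (abs_of_nonneg (hrnonneg z)).trans_le (hρ z)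
  have := isFiniteKernel_Qkernel (M := M) hρ
  have hQrev : (Qkernel M r).IsReversible πprev := hdens ▸ isReversible_Qkernel hMrev hrmeas
  have hfint : Integrable f πprev :=
    ((memLp_two_iff_integrable_sq hfmeas.aestronglyMeasurable).2 hfL2).integrable one_le_two
  have hvar := varI_mbar hMrev hrmeas hrnonneg hfmeas hfnonneg hdens (by
    rw [← ofReal_integral_eq_lintegral_ofReal hfint (ae_of_all _ hfnonneg), hfdens,
      ENNReal.ofReal_one])
  have hdirichlet := hQrev.lintegral_lintegral_sub_sq_add_two_mul hfmeas hfnonneg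
  simp_rw [← ENNReal.ofReal_pow (hfnonneg _)] at hdirichlet
  have hmass := lintegral_ofReal_sq_mul_Qkernel_univ_le (π := πprev) (M := M) hrmeas hrC hfmeas hfL2
  obtain ⟨hE, h2B⟩ := ENNReal.add_ne_top.1 <| hdirichlet ▸
    ENNReal.mul_ne_top ENNReal.ofNat_ne_top (ne_top_of_le_ne_top ENNReal.ofReal_ne_top hmass)
  have hdirichlet' := congrArg ENNReal.toReal hdirichlet
  rw [ENNReal.toReal_add hE h2B, ENNReal.toReal_mul, ENNReal.toReal_mul,
    ENNReal.toReal_ofNat] at hdirichlet'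
  have hgap := specGap_mul_two_mul_varI_le (M := M) (r := r) hfmeas hfL2
  simp_rw [Qmeas_eq_Qkernel hrmeas] at hgap
  rw [integral_integral_eq_toReal_lintegral_lintegral (by fun_prop) (fun _ _ => sq_nonneg _) hE]
    at hgap
  have hα := discrepancy_nonneg (π := πprev) (M := M) hrmeas fun _ => integral_abs_sub_one_le hrC
  have hI : ∫ x, f x ^ 2 ∂πprev = varI πprev f + 1 := by rw [varI, hfdens]; ring
  have hmass' := ENNReal.toReal_le_of_le_ofReal (by positivity) hmass
  rw [hI] at hmass'
  rw [hvar]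
  linarith
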